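/- Let π be a finite measure on a product space X × Y with target marginal π₁ (pushforward under the second projection), and let ν be a finite measure on Y with π₁ ≪ ν and ν ≪ π₁. Set s = dπ₁/dν. Then the measure on X × Y with density (x,y) ↦ s(y)⁻¹ with respect to π has second marginal equal to ν. -/

import Mathlib

open MeasureTheory ENNReal

lemma MeasureTheory.Measure.map_withDensity_comp {α β : Type*} [MeasurableSpace α]
    [MeasurableSpace β] (μ : Measure α) {f : α → β} (hf : Measurable f) {g : β → ℝ≥0∞}
    (hg : Measurable g) :
    (μ.withDensity (g ∘ f)).map f = (μ.map f).withDensity g := by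
  ext s hs
  rw [Measure.map_apply hf hs, withDensity_apply _ (hf hs), withDensity_apply _ hs,
    setLIntegral_map hs hg hf, Function.comp_def]

lemma MeasureTheory.Measure.withDensity_inv_rnDeriv {α : Type*} [MeasurableSpace α]
    {μ ν : Measure α} [SigmaFinite μ] [SigmaFinite ν] (hμν : μ ≪ ν) (hνμ : ν ≪ μ) :
    μ.withDensity (μ.rnDeriv ν)⁻¹ = ν :=
  (withDensity_congr_ae (Measure.inv_rnDeriv hμν)).trans (Measure.withDensity_rnDeriv_eq _ _ hνμ)

/-- Reweighting a coupling by the inverse majority score `s(y)⁻¹ = (d(π₁)/dν)(y)⁻¹`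
yields a measure on `X × Y` whose second marginal is exactly `ν`. -/
theorem stmt2 {X Y : Type*} [MeasurableSpace X] [MeasurableSpace Y]
    (π : Measure (X × Y)) [IsFiniteMeasure π] (ν : Measure Y) [IsFiniteMeasure ν]
    (h1 : π.map Prod.snd ≪ ν) (h2 : ν ≪ π.map Prod.snd) :
    (π.withDensity (fun p => (((π.map Prod.snd).rnDeriv ν) p.2)⁻¹)).map Prod.snd = ν := by
  exact (π.map_withDensity_comp measurable_snd (Measure.measurable_rnDeriv _ _).inv).trans
    (Measure.withDensity_inv_rnDeriv h1 h2)
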